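/- arXiv:1612.09024 — 2 statements merged into one kernel-verified Lean document; each statement's English description precedes it below -/
import Mathlib

section
/- A unit-speed smooth curve x:(a,b)→ℝ^{1+p} is a ξ-curve (i.e. the normal vector field H + x^⊥ is parallel in the normal bundle) if and only if its first and second Frenet curvatures satisfy κ₁' − κ₁⟨x, x'⟩ ≡ 0 and κ₁κ₂ ≡ 0; in particular any ξ-curve with nonvanishing curvature is a plane curve whose curvature κ satisfies κ' = κ⟨x, x'⟩. -/
open scoped RealInnerProductSpace
open Set

/-- A unit-speed smooth curve `x : (a,b) → ℝ^{1+p}` with Frenet frame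
`e 0 = x'`, `e 1, …, e p` and Frenet curvatures `κ 1, …, κ p` (with the conventions
`κ 0 = 0` and `κ j = 0` for `j > p`) is a ξ-curve — i.e. the normal part of the
derivative of `H + x^⊥ = x'' + x − ⟨x, x'⟩ x'` vanishes — if and only if
`κ₁' − κ₁⟨x, x'⟩ ≡ 0` and `κ₁κ₂ ≡ 0`.  In particular, a ξ-curve with nowhere
vanishing curvature is a plane curve (`κ₂ ≡ 0`) whose curvature satisfies
`κ' = κ⟨x, x'⟩`. -/
theorem xi_curve_characterization
    (p : ℕ) (hp : 1 ≤ p) (a b : ℝ) (hab : a < b)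
    (x : ℝ → EuclideanSpace ℝ (Fin (1 + p)))
    (e : ℕ → ℝ → EuclideanSpace ℝ (Fin (1 + p)))
    (κ : ℕ → ℝ → ℝ)
    (hx : ContDiff ℝ (⊤ : ℕ∞) x)
    (he : ∀ i, ContDiff ℝ (⊤ : ℕ∞) (e i))
    (hκ : ∀ i, ContDiff ℝ (⊤ : ℕ∞) (κ i))
    -- unit speed
    (hunit : ∀ s ∈ Ioo a b, ‖deriv x s‖ = 1)
    -- the frame is orthonormal
    (horth : ∀ i ≤ p, ∀ j ≤ p, ∀ s ∈ Ioo a b,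
      ⟪e i s, e j s⟫ = if i = j then 1 else 0)
    -- `e 0` is the unit tangent
    (hT : ∀ s ∈ Ioo a b, e 0 s = deriv x s)
    -- conventions for the curvatures
    (hκ0 : ∀ s, κ 0 s = 0) (hκhigh : ∀ j, p < j → ∀ s, κ j s = 0)
    -- the Frenet equations
    (hFrenet : ∀ i ≤ p, ∀ s ∈ Ioo a b,
      deriv (e i) s = -(κ i s) • e (i - 1) s + κ (i + 1) s • e (i + 1) s) :
    -- `x` is a ξ-curve (D^⊥ of `H + x^⊥` vanishes) iff the two curvature equations hold
    ((∀ s ∈ Ioo a b, ∀ i, 1 ≤ i → i ≤ p →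
        ⟪deriv (fun t => deriv (deriv x) t + x t - ⟪x t, deriv x t⟫ • deriv x t) s,
          e i s⟫ = 0)
      ↔ (∀ s ∈ Ioo a b,
          deriv (κ 1) s - κ 1 s * ⟪x s, deriv x s⟫ = 0 ∧ κ 1 s * κ 2 s = 0))
    ∧
    -- in particular: a ξ-curve with nonvanishing curvature is a plane curve with κ' = κ⟨x,x'⟩
    ((∀ s ∈ Ioo a b, ∀ i, 1 ≤ i → i ≤ p →
        ⟪deriv (fun t => deriv (deriv x) t + x t - ⟪x t, deriv x t⟫ • deriv x t) s,
          e i s⟫ = 0) →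
      (∀ s ∈ Ioo a b, κ 1 s ≠ 0) →
      ∀ s ∈ Ioo a b, κ 2 s = 0 ∧ deriv (κ 1) s = κ 1 s * ⟪x s, deriv x s⟫) := by
  -- abbreviations
  have hx' : ContDiff ℝ (⊤ : ℕ∞) x := hx.of_le (by simp)
  have he' : ∀ i, ContDiff ℝ (⊤ : ℕ∞) (e i) := fun i => (he i).of_le (by simp)
  have hκ' : ∀ i, ContDiff ℝ (⊤ : ℕ∞) (κ i) := fun i => (hκ i).of_le (by simp)
  have hx1 : ContDiff ℝ (⊤ : ℕ∞) (deriv x) := (contDiff_infty_iff_deriv.mp hx').2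
  have hx2 : ContDiff ℝ (⊤ : ℕ∞) (deriv (deriv x)) := (contDiff_infty_iff_deriv.mp hx1).2
  -- key: an explicit formula for the derivative of H + x^⊥ on the interval
  have key : ∀ s ∈ Ioo a b,
      deriv (fun t => deriv (deriv x) t + x t - ⟪x t, deriv x t⟫ • deriv x t) s
        = (-(κ 1 s * κ 1 s) - κ 1 s * ⟪x s, e 1 s⟫) • e 0 s
          + (deriv (κ 1) s - κ 1 s * ⟪x s, deriv x s⟫) • e 1 s
          + (κ 1 s * κ 2 s) • e 2 s := by
    intro s hs
    have hmem : Ioo a b ∈ nhds s := isOpen_Ioo.mem_nhds hs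
    have hgE : deriv x =ᶠ[nhds s] e 0 :=
      Filter.eventually_of_mem hmem fun t ht => (hT t ht).symm
    -- deriv (deriv x) = κ₁ • e 1 eventually
    have hderivg : ∀ t ∈ Ioo a b, deriv (deriv x) t = κ 1 t • e 1 t := by
      intro t ht
      have hgEt : deriv x =ᶠ[nhds t] e 0 :=
        Filter.eventually_of_mem (isOpen_Ioo.mem_nhds ht) fun u hu => (hT u hu).symm
      rw [hgEt.deriv_eq, hFrenet 0 (Nat.zero_le p) t ht]
      simp [hκ0]
    have hgE' : deriv (deriv x) =ᶠ[nhds s] fun t => κ 1 t • e 1 t :=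
      Filter.eventually_of_mem hmem fun t ht => hderivg t ht
    -- second derivative at s
    have hd2 : deriv (deriv (deriv x)) s
        = deriv (κ 1) s • e 1 s + κ 1 s • deriv (e 1) s := by
      rw [hgE'.deriv_eq]
      have h1 : HasDerivAt (κ 1) (deriv (κ 1) s) s :=
        ((hκ' 1).differentiable (by simp) s).hasDerivAt
      have h2 : HasDerivAt (e 1) (deriv (e 1) s) s :=
        ((he' 1).differentiable (by simp) s).hasDerivAt
      have := h1.smul h2
      rw [show (fun t => κ 1 t • e 1 t) = κ 1 • e 1 from rfl, this.deriv]; abel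
    have hde1 : deriv (e 1) s = -(κ 1 s) • e 0 s + κ 2 s • e 2 s := by
      simpa using hFrenet 1 hp s hs
    have hdx : deriv (deriv x) s = κ 1 s • e 1 s := hderivg s hs
    have hxs : HasDerivAt x (deriv x s) s := (hx'.differentiable (by simp) s).hasDerivAt
    have hgs : HasDerivAt (deriv x) (deriv (deriv x) s) s :=
      (hx1.differentiable (by simp) s).hasDerivAt
    have hg2s : HasDerivAt (deriv (deriv x)) (deriv (deriv (deriv x)) s) s :=
      (hx2.differentiable (by simp) s).hasDerivAt
    have hips : HasDerivAt (fun t => ⟪x t, deriv x t⟫)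
        (⟪x s, deriv (deriv x) s⟫ + ⟪deriv x s, deriv x s⟫) s :=
      hxs.inner ℝ hgs
    have hF : HasDerivAt (fun t => deriv (deriv x) t + x t - ⟪x t, deriv x t⟫ • deriv x t)
        (deriv (deriv (deriv x)) s + deriv x s
          - (⟪x s, deriv x s⟫ • deriv (deriv x) s
              + (⟪x s, deriv (deriv x) s⟫ + ⟪deriv x s, deriv x s⟫) • deriv x s)) s :=
      (hg2s.add hxs).sub (hips.smul hgs)
    rw [hF.deriv]
    have hnorm : ⟪deriv x s, deriv x s⟫ = (1 : ℝ) := by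
      rw [real_inner_self_eq_norm_mul_norm, hunit s hs]; norm_num
    have hT0 : deriv x s = e 0 s := (hT s hs).symm
    rw [hd2, hde1, hdx, hnorm, hT0]
    rw [real_inner_smul_right]
    module
  -- the projections onto the normal frame vectors
  have hinner : ∀ s ∈ Ioo a b, ∀ i, 1 ≤ i → i ≤ p →
      ⟪deriv (fun t => deriv (deriv x) t + x t - ⟪x t, deriv x t⟫ • deriv x t) s, e i s⟫
        = (if i = 1 then deriv (κ 1) s - κ 1 s * ⟪x s, deriv x s⟫ else 0)
          + (if i = 2 then κ 1 s * κ 2 s else 0) := by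
    intro s hs i hi1 hip
    rw [key s hs, inner_add_left, inner_add_left, real_inner_smul_left,
      real_inner_smul_left, real_inner_smul_left]
    have h0 : ⟪e 0 s, e i s⟫ = (0 : ℝ) := by
      rw [horth 0 (Nat.zero_le p) i hip s hs]
      simp [Nat.ne_of_lt hi1]
    have h1 : ⟪e 1 s, e i s⟫ = (if i = 1 then (1:ℝ) else 0) := by
      rw [horth 1 hp i hip s hs]
      simp [eq_comm]
    by_cases hp2 : 2 ≤ p
    · have h2 : ⟪e 2 s, e i s⟫ = (if i = 2 then (1:ℝ) else 0) := by
        rw [horth 2 hp2 i hip s hs]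
        simp [eq_comm]
      rw [h0, h1, h2]
      split_ifs <;> ring
    · have hi : i = 1 := by omega
      have hκ2 : κ 2 s = 0 := hκhigh 2 (by omega) s
      rw [h0, h1, hκ2]
      simp [hi]
  constructor
  · constructor
    · intro h s hs
      have e1 := h s hs 1 le_rfl hp
      rw [hinner s hs 1 le_rfl hp] at e1
      simp at e1
      refine ⟨e1, ?_⟩
      by_cases hp2 : 2 ≤ p
      · have e2 := h s hs 2 (by omega) hp2
        rw [hinner s hs 2 (by omega) hp2] at e2
        simpa using e2
      · have : κ 2 s = 0 := hκhigh 2 (by omega) s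
        rw [this, mul_zero]
    · intro h s hs i hi1 hip'
      rw [hinner s hs i hi1 hip']
      rcases h s hs with ⟨h1, h2⟩
      split_ifs <;> simp only [h1, h2, add_zero, zero_add]
  · intro h hne s hs
    have h' := (by
      intro s hs
      have e1 := h s hs 1 le_rfl hp
      rw [hinner s hs 1 le_rfl hp] at e1
      simp at e1
      refine ⟨e1, ?_⟩
      by_cases hp2 : 2 ≤ p
      · have e2 := h s hs 2 (by omega) hp2
        rw [hinner s hs 2 (by omega) hp2] at e2
        simpa using e2
      · have : κ 2 s = 0 := hκhigh 2 (by omega) s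
        rw [this, mul_zero] :
      ∀ s ∈ Ioo a b, deriv (κ 1) s - κ 1 s * ⟪x s, deriv x s⟫ = 0 ∧ κ 1 s * κ 2 s = 0)
    rcases h' s hs with ⟨h1, h2⟩
    refine ⟨?_, by linarith⟩
    rcases mul_eq_zero.mp h2 with h | h
    · exact absurd h (hne s hs)
    · exact h
end

section
/- Let x: M^m → ℝ^{m+p} be a compact ξ-submanifold admitting a nontrivial parallel normal vector field η. Then the second-variation quadratic form satisfies Q(η,η) = −∫_M (Σ_{i,j}⟨h_{ij},η⟩² + |η|²) e^{−f} dV < 0; in particular x is not stable. Consequently, no compact ξ-submanifold with ξ ≠ 0, and no compact simply-connected ξ-submanifold with flat normal bundle, is stable. -/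
open scoped RealInnerProductSpace
open MeasureTheory Finset

/-! For a parallel normal field the Laplacian and drift terms of the Jacobi operator vanish, so
`⟨Lη, η⟩ = Σ ⟨h_{ij}, η⟩² + |η|²`. This weight is nonnegative and vanishes exactly where `η` does;
as `η` is continuous and nontrivial, it is positive on a nonempty open set, which has positive
measure, so `Q(η, η) < 0`. On a compact manifold `η` itself is an admissible variation. -/

section SecondFundamentalForm

variable {ι κ E : Type*} [Fintype ι] [Fintype κ] [NormedAddCommGroup E] [InnerProductSpace ℝ E]

theorem inner_sum_inner_smul_add_self (v : ι → κ → E) (x : E) :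
    ⟪(∑ i, ∑ j, ⟪v i j, x⟫ • v i j) + x, x⟫ = (∑ i, ∑ j, ⟪v i j, x⟫ ^ 2) + ‖x‖ ^ 2 := by
  simp only [inner_add_left, sum_inner, real_inner_smul_left, real_inner_self_eq_norm_sq, sq]

theorem sum_sum_sq_inner_nonneg (v : ι → κ → E) (x : E) : 0 ≤ ∑ i, ∑ j, ⟪v i j, x⟫ ^ 2 :=
  sum_nonneg fun _ _ => sum_nonneg fun _ _ => sq_nonneg _

theorem sum_sum_sq_inner_add_norm_sq_eq_zero_iff (v : ι → κ → E) (x : E) :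
    (∑ i, ∑ j, ⟪v i j, x⟫ ^ 2) + ‖x‖ ^ 2 = 0 ↔ x = 0 := by
  refine ⟨fun hzero => ?_, fun hx => by simp [hx]⟩
  have hnorm : ‖x‖ ^ 2 = 0 := by linarith [sum_sum_sq_inner_nonneg v x, sq_nonneg ‖x‖]
  simpa using hnorm

theorem support_sum_sum_sq_inner_add_norm_sq_mul_exp {M : Type*} (v : ι → κ → M → E)
    (η : M → E) (f : M → ℝ) :
    Function.support (fun q => ((∑ i, ∑ j, ⟪v i j q, η q⟫ ^ 2) + ‖η q‖ ^ 2) * Real.exp (-f q))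
      = Function.support η := by
  ext q
  simp only [Function.mem_support, ne_eq, mul_eq_zero, Real.exp_ne_zero, or_false,
    sum_sum_sq_inner_add_norm_sq_eq_zero_iff (fun i j => v i j q)]

end SecondFundamentalForm

theorem compact_xi_with_parallel_normal_field_not_stable_general
    (m p : ℕ) {M : Type*} [TopologicalSpace M] [MeasurableSpace M]
    [CompactSpace M]
    (μ : Measure M) [μ.IsOpenPosMeasure]
    (f : M → ℝ)
    (h : Fin m → Fin m → M → EuclideanSpace ℝ (Fin (m + p)))
    (lapPerp DX : (M → EuclideanSpace ℝ (Fin (m + p))) →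
      M → EuclideanSpace ℝ (Fin (m + p)))
    (Parallel Normal : (M → EuclideanSpace ℝ (Fin (m + p))) → Prop)
    -- for parallel normal fields, Δ^⊥ and the drift derivative vanish
    (hlapPar : ∀ η, Parallel η → ∀ q, lapPerp η q = 0)
    (hDXPar : ∀ η, Parallel η → ∀ q, DX η q = 0)
    -- the nontrivial parallel normal field
    (η : M → EuclideanSpace ℝ (Fin (m + p)))
    (hPar : Parallel η) (hNor : Normal η) (hcont : Continuous η)
    (hne : ∃ q, η q ≠ 0)
    -- integrability of the relevant quantities on the compact manifold
    (hint : Integrable (fun q =>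
      ((∑ i, ∑ j, ⟪h i j q, η q⟫ ^ 2) + ‖η q‖ ^ 2) * Real.exp (-f q)) μ) :
    -- Q(η,η) equals the explicit negative quantity
    (-∫ q, ⟪lapPerp η q - DX η q
          + (∑ i, ∑ j, ⟪h i j q, η q⟫ • h i j q) + η q, η q⟫ *
          Real.exp (-f q) ∂μ
      = -∫ q, ((∑ i, ∑ j, ⟪h i j q, η q⟫ ^ 2) + ‖η q‖ ^ 2) *
          Real.exp (-f q) ∂μ)
    ∧ (-∫ q, ⟪lapPerp η q - DX η q
          + (∑ i, ∑ j, ⟪h i j q, η q⟫ • h i j q) + η q, η q⟫ *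
          Real.exp (-f q) ∂μ < 0)
    ∧ -- x is not stable
      ¬ (∀ η' : M → EuclideanSpace ℝ (Fin (m + p)),
          Normal η' → HasCompactSupport η' →
          0 ≤ -∫ q, ⟪lapPerp η' q - DX η' q
              + (∑ i, ∑ j, ⟪h i j q, η' q⟫ • h i j q) + η' q, η' q⟫ *
              Real.exp (-f q) ∂μ) := by
  have hQ : ∫ q, ⟪lapPerp η q - DX η q
          + (∑ i, ∑ j, ⟪h i j q, η q⟫ • h i j q) + η q, η q⟫ * Real.exp (-f q) ∂μ
      = ∫ q, ((∑ i, ∑ j, ⟪h i j q, η q⟫ ^ 2) + ‖η q‖ ^ 2) * Real.exp (-f q) ∂μ := by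
    refine integral_congr_ae (ae_of_all _ fun q => ?_)
    simp only [hlapPar η hPar q, hDXPar η hPar q, sub_zero, zero_add,
      inner_sum_inner_smul_add_self (fun i j => h i j q)]
  have hweight_nonneg : 0 ≤ fun q =>
      ((∑ i, ∑ j, ⟪h i j q, η q⟫ ^ 2) + ‖η q‖ ^ 2) * Real.exp (-f q) := fun q =>
    mul_nonneg (add_nonneg (sum_sum_sq_inner_nonneg _ _) (sq_nonneg _)) (Real.exp_pos _).le
  have hpos : 0 < ∫ q, ((∑ i, ∑ j, ⟪h i j q, η q⟫ ^ 2) + ‖η q‖ ^ 2) * Real.exp (-f q) ∂μ := by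
    rw [integral_pos_iff_support_of_nonneg hweight_nonneg hint,
      support_sum_sum_sq_inner_add_norm_sq_mul_exp]
    exact hcont.isOpen_support.measure_pos μ hne
  refine ⟨by rw [hQ], by rw [hQ]; linarith, fun hstable => ?_⟩
  have := hstable η hNor (HasCompactSupport.of_compactSpace η)
  rw [hQ] at this
  linarith

/-- Let `x : M → ℝ^{m+p}` be a compact ξ-submanifold admitting a
nontrivial parallel normal field `η`.  With the second variation
`Q(η,η) = −∫ ⟨Lη, η⟩ e^{−f} dV`, `L = Δ^⊥ − D^⊥_{x^⊤+A_ξ(x^⊤)} + ⟨h_{ij},·⟩h_{ij} + 1`,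
and using that for parallel `η` the Laplacian and drift terms vanish, one gets
`Q(η,η) = −∫ (Σ⟨h_{ij},η⟩² + |η|²) e^{−f} dV < 0`; in particular `x` is not
stable (there is a compactly supported normal field with negative second
variation). -/
theorem compact_xi_with_parallel_normal_field_not_stable
    (m p : ℕ) {M : Type*} [TopologicalSpace M] [MeasurableSpace M]
    [CompactSpace M] [OpensMeasurableSpace M]
    (μ : Measure M) [μ.IsOpenPosMeasure] [IsFiniteMeasure μ]
    (f : M → ℝ) (hf : Continuous f)
    (h : Fin m → Fin m → M → EuclideanSpace ℝ (Fin (m + p)))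
    (lapPerp DX : (M → EuclideanSpace ℝ (Fin (m + p))) →
      M → EuclideanSpace ℝ (Fin (m + p)))
    (Parallel Normal : (M → EuclideanSpace ℝ (Fin (m + p))) → Prop)
    -- for parallel normal fields, Δ^⊥ and the drift derivative vanish
    (hlapPar : ∀ η, Parallel η → ∀ q, lapPerp η q = 0)
    (hDXPar : ∀ η, Parallel η → ∀ q, DX η q = 0)
    -- the nontrivial parallel normal field
    (η : M → EuclideanSpace ℝ (Fin (m + p)))
    (hPar : Parallel η) (hNor : Normal η) (hcont : Continuous η)
    (hne : ∃ q, η q ≠ 0)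
    -- integrability of the relevant quantities on the compact manifold
    (hint : Integrable (fun q =>
      ((∑ i, ∑ j, ⟪h i j q, η q⟫ ^ 2) + ‖η q‖ ^ 2) * Real.exp (-f q)) μ)
    (hconth : ∀ i j, Continuous (h i j)) :
    -- Q(η,η) equals the explicit negative quantity
    (-∫ q, ⟪lapPerp η q - DX η q
          + (∑ i, ∑ j, ⟪h i j q, η q⟫ • h i j q) + η q, η q⟫ *
          Real.exp (-f q) ∂μ
      = -∫ q, ((∑ i, ∑ j, ⟪h i j q, η q⟫ ^ 2) + ‖η q‖ ^ 2) *
          Real.exp (-f q) ∂μ)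
    ∧ (-∫ q, ⟪lapPerp η q - DX η q
          + (∑ i, ∑ j, ⟪h i j q, η q⟫ • h i j q) + η q, η q⟫ *
          Real.exp (-f q) ∂μ < 0)
    ∧ -- x is not stable
      ¬ (∀ η' : M → EuclideanSpace ℝ (Fin (m + p)),
          Normal η' → HasCompactSupport η' →
          0 ≤ -∫ q, ⟪lapPerp η' q - DX η' q
              + (∑ i, ∑ j, ⟪h i j q, η' q⟫ • h i j q) + η' q, η' q⟫ *
              Real.exp (-f q) ∂μ) :=
  compact_xi_with_parallel_normal_field_not_stable_general m p μ f h lapPerp DX Parallel Normal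
    hlapPar hDXPar η hPar hNor hcont hne hint
end
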